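/- For nonnegative integers $i,j$, $(-1)^{k-i}\,{}_2F_1\!\left[k-i,\,k+\tfrac32;\,2k+3;\,4\right] = {}_2F_1\!\left[\tfrac{k-i+1}{2},\tfrac{k-i}{2};\,k+2;\,4\right]$ for all integers $0\le k\le i$. -/

import Mathlib

/-- The rising factorial `(a)ₘ = a (a+1) ⋯ (a+m-1)` in `ℚ`. -/
def risingFactorial (a : ℚ) (m : ℕ) : ℚ :=
  ∏ l ∈ Finset.range m, (a + l)

/-- A terminating Gauss hypergeometric sum `₂F₁[a, b; c; x]`, summed for `m < N`.
When one of the numerator parameters makes all terms with `m ≥ N` vanish, this is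
the full hypergeometric value. -/
def hyp2F1 (a b c x : ℚ) (N : ℕ) : ℚ :=
  ∑ m ∈ Finset.range N,
    risingFactorial a m * risingFactorial b m /
      (risingFactorial c m * m.factorial) * x ^ m

open Finset

lemma rf_zero (a : ℚ) : risingFactorial a 0 = 1 := by simp [risingFactorial]

lemma rf_succ (a : ℚ) (m : ℕ) :
    risingFactorial a (m + 1) = risingFactorial a m * (a + m) := by
  simp [risingFactorial, Finset.prod_range_succ]

lemma rf_succ' (a : ℚ) (m : ℕ) :
    risingFactorial a (m + 1) = a * risingFactorial (a + 1) m := by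
  rw [risingFactorial, Finset.prod_range_succ']
  simp only [Nat.cast_zero, add_zero, Nat.cast_add, Nat.cast_one]
  rw [mul_comm]
  congr 1
  unfold risingFactorial
  apply Finset.prod_congr rfl
  intro l _
  ring

lemma rf_pos (a : ℚ) (ha : 0 < a) (m : ℕ) : 0 < risingFactorial a m := by
  apply Finset.prod_pos
  intro l _
  positivity

lemma rf_nat_zero (n m : ℕ) (h : n < m) : risingFactorial (-(n : ℚ)) m = 0 := by
  apply Finset.prod_eq_zero (Finset.mem_range.2 h)
  simp

lemma rf_two (a : ℚ) (s : ℕ) :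
    risingFactorial a (s + 1 + 1) = risingFactorial a s * (a + s) * (a + s + 1) := by
  rw [rf_succ, rf_succ]
  push_cast
  ring

lemma rf_dup (x : ℚ) (m : ℕ) :
    risingFactorial ((x + 1) / 2) m * risingFactorial (x / 2) m * 4 ^ m =
      risingFactorial x (2 * m) := by
  induction m with
  | zero => simp [rf_zero]
  | succ m ih =>
      have e1 : 2 * (m + 1) = 2 * m + 1 + 1 := by ring
      rw [e1, rf_two, rf_succ, rf_succ, pow_succ, ← ih]
      push_cast
      ring

/-- R-side summand: `(-n)_{2m} / ((k+2)_m m!)`. -/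
def uu (k n m : ℕ) : ℚ :=
  risingFactorial (-(n : ℚ)) (2 * m) / (risingFactorial ((k : ℚ) + 2) m * m.factorial)

/-- L-side summand (without sign): `(-n)_j (k+3/2)_j 4^j / ((2k+3)_j j!)`. -/
def tt (k n j : ℕ) : ℚ :=
  risingFactorial (-(n : ℚ)) j * risingFactorial ((k : ℚ) + 3 / 2) j * 4 ^ j /
    (risingFactorial (2 * (k : ℚ) + 3) j * j.factorial)

lemma uu_zero (k n m : ℕ) (h : n < m) : uu k n m = 0 := by
  unfold uu
  rw [rf_nat_zero n (2 * m) (by omega), zero_div]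

lemma tt_zero (k n j : ℕ) (h : n < j) : tt k n j = 0 := by
  unfold tt
  rw [rf_nat_zero n j h]
  ring

lemma hyp_eq_sum_tt (k n N : ℕ) :
    hyp2F1 (-(n : ℚ)) ((k : ℚ) + 3 / 2) (2 * (k : ℚ) + 3) 4 N =
      ∑ j ∈ range N, tt k n j := by
  unfold hyp2F1 tt
  apply Finset.sum_congr rfl
  intro j _
  ring

lemma hyp_eq_sum_uu (k n N : ℕ) :
    hyp2F1 ((-(n : ℚ) + 1) / 2) (-(n : ℚ) / 2) ((k : ℚ) + 2) 4 N =
      ∑ m ∈ range N, uu k n m := by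
  unfold hyp2F1 uu
  apply Finset.sum_congr rfl
  intro m _
  rw [← rf_dup (-(n : ℚ)) m]
  ring

lemma sum_tt_ext (k n N : ℕ) (h : n + 1 ≤ N) :
    ∑ j ∈ range N, tt k n j = ∑ j ∈ range (n + 1), tt k n j := by
  refine (Finset.sum_subset (Finset.range_subset_range.2 h) ?_).symm
  intro j _ hj
  exact tt_zero k n j (by simp only [Finset.mem_range] at hj; omega)

lemma sum_uu_ext (k n N : ℕ) (h : n + 1 ≤ N) :
    ∑ m ∈ range N, uu k n m = ∑ m ∈ range (n + 1), uu k n m := by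
  refine (Finset.sum_subset (Finset.range_subset_range.2 h) ?_).symm
  intro m _ hm
  exact uu_zero k n m (by simp only [Finset.mem_range] at hm; omega)

/-- WZ certificate for the R side. -/
def GU (k n : ℕ) : ℕ → ℚ
  | 0 => 0
  | m + 1 => 4 * ((n : ℚ) + 1) * uu k n m

lemma fact_ne (m : ℕ) : ((m.factorial : ℚ)) ≠ 0 := by
  exact_mod_cast m.factorial_ne_zero

lemma stepU (k n m : ℕ) :
    3 * ((n : ℚ) + 1) * uu k n m + (2 * (n : ℚ) + 2 * k + 5) * uu k (n + 1) m
      - ((n : ℚ) + 2 * k + 4) * uu k (n + 2) m = GU k n (m + 1) - GU k n m := by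
  cases m with
  | zero =>
      simp only [GU, uu, Nat.mul_zero, rf_zero, Nat.factorial_zero]
      norm_num
      ring
  | succ m =>
      have hC : risingFactorial ((k : ℚ) + 2) m ≠ 0 := ne_of_gt (rf_pos _ (by positivity) m)
      simp only [GU, uu]
      have e1 : 2 * (m + 1) = 2 * m + 1 + 1 := by ring
      have e2 : (-(((n : ℕ) + 1 : ℕ) : ℚ)) = -(n : ℚ) - 1 := by push_cast; ring
      have e3 : (-(((n : ℕ) + 2 : ℕ) : ℚ)) = -(n : ℚ) - 2 := by push_cast; ring
      rw [e1, e2, e3]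
      rw [rf_two (-(n : ℚ)) (2 * m)]
      have h1 : risingFactorial (-(n : ℚ) - 1) (2 * m + 1 + 1)
          = (-(n : ℚ) - 1) * (risingFactorial (-(n : ℚ)) (2 * m) * (-(n : ℚ) + (2 * m : ℕ))) := by
        rw [rf_succ' (-(n : ℚ) - 1) (2 * m + 1)]
        have : -(n : ℚ) - 1 + 1 = -(n : ℚ) := by ring
        rw [this, rf_succ]
      have h2 : risingFactorial (-(n : ℚ) - 2) (2 * m + 1 + 1)
          = (-(n : ℚ) - 2) * ((-(n : ℚ) - 1) * risingFactorial (-(n : ℚ)) (2 * m)) := by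
        rw [rf_succ' (-(n : ℚ) - 2) (2 * m + 1)]
        have e : -(n : ℚ) - 2 + 1 = -(n : ℚ) - 1 := by ring
        rw [e, rf_succ' (-(n : ℚ) - 1) (2 * m)]
        have e' : -(n : ℚ) - 1 + 1 = -(n : ℚ) := by ring
        rw [e']
      rw [h1, h2, rf_succ ((k : ℚ) + 2) m, Nat.factorial_succ]
      set R := risingFactorial (-(n : ℚ)) (2 * m) with hR
      set C := risingFactorial ((k : ℚ) + 2) m with hCd
      have hF : ((m.factorial : ℚ)) ≠ 0 := fact_ne m
      have hcm : (k : ℚ) + 2 + m ≠ 0 := by positivity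
      have hm1 : ((m : ℚ) + 1) ≠ 0 := by positivity
      push_cast
      field_simp
      ring

lemma recU (k n : ℕ) :
    ((n : ℚ) + 2 * k + 4) * (∑ m ∈ range (n + 3), uu k (n + 2) m)
      = (2 * (n : ℚ) + 2 * k + 5) * (∑ m ∈ range (n + 3), uu k (n + 1) m)
        + 3 * ((n : ℚ) + 1) * (∑ m ∈ range (n + 3), uu k n m) := by
  have key : ∑ m ∈ range (n + 3),
      (3 * ((n : ℚ) + 1) * uu k n m + (2 * (n : ℚ) + 2 * k + 5) * uu k (n + 1) m
        - ((n : ℚ) + 2 * k + 4) * uu k (n + 2) m) = 0 := by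
    have := Finset.sum_range_sub (GU k n) (n + 3)
    rw [Finset.sum_congr rfl fun m _ => stepU k n m, this]
    show GU k n (n + 2 + 1) - GU k n 0 = 0
    simp [GU, uu_zero k n (n + 2) (by omega)]
  rw [Finset.sum_sub_distrib, Finset.sum_add_distrib, ← Finset.mul_sum, ← Finset.mul_sum,
    ← Finset.mul_sum] at key
  linarith

/-- WZ certificate for the L side. -/
def GT (k n : ℕ) : ℕ → ℚ
  | 0 => 0
  | 1 => -(4 * (k : ℚ) + 6)
  | s + 2 => 2 * ((n : ℚ) + 1) * (2 * (s : ℚ) + 2 * k + 5) *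
      risingFactorial (-(n : ℚ)) s * risingFactorial ((k : ℚ) + 3 / 2) (s + 1) * 4 ^ (s + 1) /
        (risingFactorial (2 * (k : ℚ) + 3) (s + 1) * (s + 1).factorial)

lemma stepT (k n j : ℕ) :
    3 * ((n : ℚ) + 1) * tt k n j - (2 * (n : ℚ) + 2 * k + 5) * tt k (n + 1) j
      - ((n : ℚ) + 2 * k + 4) * tt k (n + 2) j = GT k n (j + 1) - GT k n j := by
  have e2 : (-(((n : ℕ) + 1 : ℕ) : ℚ)) = -(n : ℚ) - 1 := by push_cast; ring
  have e3 : (-(((n : ℕ) + 2 : ℕ) : ℚ)) = -(n : ℚ) - 2 := by push_cast; ring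
  match j with
  | 0 =>
      simp only [GT, tt, rf_zero, Nat.factorial_zero, pow_zero]
      norm_num
      ring
  | 1 =>
      simp only [GT, tt, e2, e3]
      rw [show (1 : ℕ) = 0 + 1 from rfl, rf_succ, rf_succ, rf_succ, rf_succ, rf_succ]
      simp only [rf_zero, Nat.factorial_one, Nat.factorial_zero]
      have h1 : (2 * (k : ℚ) + 3) ≠ 0 := by positivity
      push_cast
      field_simp
      ring
  | (s + 2) =>
      simp only [GT, tt, e2, e3]
      have h1 : risingFactorial (-(n : ℚ)) (s + 1 + 1)
          = risingFactorial (-(n : ℚ)) s * (-(n : ℚ) + s) * (-(n : ℚ) + s + 1) :=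
        rf_two _ s
      have h2 : risingFactorial (-(n : ℚ) - 1) (s + 1 + 1)
          = (-(n : ℚ) - 1) * (risingFactorial (-(n : ℚ)) s * (-(n : ℚ) + s)) := by
        rw [rf_succ' (-(n : ℚ) - 1) (s + 1)]
        have e : -(n : ℚ) - 1 + 1 = -(n : ℚ) := by ring
        rw [e, rf_succ]
      have h3 : risingFactorial (-(n : ℚ) - 2) (s + 1 + 1)
          = (-(n : ℚ) - 2) * ((-(n : ℚ) - 1) * risingFactorial (-(n : ℚ)) s) := by
        rw [rf_succ' (-(n : ℚ) - 2) (s + 1)]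
        have e : -(n : ℚ) - 2 + 1 = -(n : ℚ) - 1 := by ring
        rw [e, rf_succ' (-(n : ℚ) - 1) s]
        have e' : -(n : ℚ) - 1 + 1 = -(n : ℚ) := by ring
        rw [e']
      have h4 : risingFactorial ((k : ℚ) + 3 / 2) (s + 1 + 1)
          = risingFactorial ((k : ℚ) + 3 / 2) (s + 1) * ((k : ℚ) + 3 / 2 + (s + 1 : ℕ)) :=
        rf_succ _ _
      have h5 : risingFactorial (2 * (k : ℚ) + 3) (s + 1 + 1)
          = risingFactorial (2 * (k : ℚ) + 3) (s + 1) * (2 * (k : ℚ) + 3 + (s + 1 : ℕ)) :=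
        rf_succ _ _
      have h6 : risingFactorial (-(n : ℚ)) (s + 1)
          = risingFactorial (-(n : ℚ)) s * (-(n : ℚ) + s) := rf_succ _ _
      rw [show s + 2 = s + 1 + 1 from rfl, h1, h2, h3, h4, h5, h6,
        Nat.factorial_succ (s + 1), pow_succ (4 : ℚ) (s + 1)]
      set R := risingFactorial (-(n : ℚ)) s with hRd
      set B := risingFactorial ((k : ℚ) + 3 / 2) (s + 1) with hBd
      set D := risingFactorial (2 * (k : ℚ) + 3) (s + 1) with hDd
      have hD : D ≠ 0 := ne_of_gt (rf_pos _ (by positivity) (s + 1))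
      have hF : (((s + 1).factorial : ℚ)) ≠ 0 := fact_ne (s + 1)
      have hds : (2 * (k : ℚ) + 3 + ((s : ℚ) + 1)) ≠ 0 := by positivity
      have hs2 : ((s : ℚ) + 1 + 1) ≠ 0 := by positivity
      push_cast
      field_simp
      ring

lemma recT (k n : ℕ) :
    3 * ((n : ℚ) + 1) * (∑ j ∈ range (n + 3), tt k n j)
      - (2 * (n : ℚ) + 2 * k + 5) * (∑ j ∈ range (n + 3), tt k (n + 1) j)
      - ((n : ℚ) + 2 * k + 4) * (∑ j ∈ range (n + 3), tt k (n + 2) j) = 0 := by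
  have key : ∑ j ∈ range (n + 3),
      (3 * ((n : ℚ) + 1) * tt k n j - (2 * (n : ℚ) + 2 * k + 5) * tt k (n + 1) j
        - ((n : ℚ) + 2 * k + 4) * tt k (n + 2) j) = 0 := by
    have := Finset.sum_range_sub (GT k n) (n + 3)
    rw [Finset.sum_congr rfl fun j _ => stepT k n j, this]
    show GT k n (n + 1 + 2) - GT k n 0 = 0
    simp [GT, rf_nat_zero n (n + 1) (by omega)]
  rw [Finset.sum_sub_distrib, Finset.sum_sub_distrib, ← Finset.mul_sum, ← Finset.mul_sum,
    ← Finset.mul_sum] at key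
  linarith

lemma rf_one (x : ℚ) : risingFactorial x 1 = x := by
  rw [show (1 : ℕ) = 0 + 1 from rfl, rf_succ, rf_zero]
  norm_num

lemma AB (k : ℕ) : ∀ n : ℕ,
    (-1 : ℚ) ^ n * (∑ j ∈ range (n + 1), tt k n j) = ∑ m ∈ range (n + 1), uu k n m := by
  have base0 : (-1 : ℚ) ^ 0 * (∑ j ∈ range 1, tt k 0 j) = ∑ m ∈ range 1, uu k 0 m := by
    norm_num [Finset.sum_range_one, tt, uu, rf_zero]
  have base1 : (-1 : ℚ) ^ 1 * (∑ j ∈ range 2, tt k 1 j) = ∑ m ∈ range 2, uu k 1 m := by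
    have r2 : risingFactorial (-((1 : ℕ) : ℚ)) 2 = 0 := rf_nat_zero 1 2 (by omega)
    norm_num at r2
    have h1 : (2 * (k : ℚ) + 3) ≠ 0 := by positivity
    simp only [Finset.sum_range_succ, Finset.sum_range_zero, tt, uu]
    norm_num [rf_zero, rf_one, r2]
    field_simp
    ring
  have H : ∀ n : ℕ,
      ((-1 : ℚ) ^ n * (∑ j ∈ range (n + 1), tt k n j) = ∑ m ∈ range (n + 1), uu k n m) ∧
      ((-1 : ℚ) ^ (n + 1) * (∑ j ∈ range (n + 2), tt k (n + 1) j)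
        = ∑ m ∈ range (n + 2), uu k (n + 1) m) := by
    intro n
    induction n with
    | zero => exact ⟨base0, base1⟩
    | succ n ih =>
        refine ⟨ih.2, ?_⟩
        have hT := recT k n
        have hU := recU k n
        rw [sum_tt_ext k n (n + 3) (by omega), sum_tt_ext k (n + 1) (n + 3) (by omega)] at hT
        rw [sum_uu_ext k n (n + 3) (by omega), sum_uu_ext k (n + 1) (n + 3) (by omega)] at hU
        have IH0 := ih.1
        have IH1 := ih.2
        have hne : ((n : ℚ) + 2 * k + 4) ≠ 0 := by positivity
        have e1 : ((-1 : ℚ)) ^ (n + 1) = -((-1 : ℚ)) ^ n := by rw [pow_succ]; ring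
        have e2 : ((-1 : ℚ)) ^ (n + 1 + 1) = ((-1 : ℚ)) ^ n := by
          rw [pow_succ, pow_succ]; ring
        rw [e1] at IH1
        have key : ((n : ℚ) + 2 * k + 4) * (((-1 : ℚ)) ^ (n + 1 + 1)
              * (∑ j ∈ range (n + 1 + 2), tt k (n + 1 + 1) j))
            = ((n : ℚ) + 2 * k + 4) * (∑ m ∈ range (n + 1 + 2), uu k (n + 1 + 1) m) := by
          rw [e2]
          have en : n + 1 + 1 = n + 2 := by omega
          have en' : n + 1 + 2 = n + 3 := by omega
          rw [en, en']
          rw [show n + 1 + 1 = n + 2 from rfl] at hT hU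
          linear_combination (-((-1 : ℚ)) ^ n) * hT - hU + 3 * ((n : ℚ) + 1) * IH0
            + (2 * (n : ℚ) + 2 * k + 5) * IH1
        exact mul_left_cancel₀ hne key
  exact fun n => (H n).1

theorem stmt_4 (i k : ℕ) (hk : k ≤ i) :
    (-1 : ℚ) ^ (i - k) *
        hyp2F1 ((k : ℚ) - i) ((k : ℚ) + 3 / 2) (2 * (k : ℚ) + 3) 4 (i + 1) =
      hyp2F1 (((k : ℚ) - i + 1) / 2) (((k : ℚ) - i) / 2) ((k : ℚ) + 2) 4 (i + 1) := by
  have hki : ((k : ℚ) - i) = -(((i - k : ℕ)) : ℚ) := by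
    rw [Nat.cast_sub hk]; ring
  rw [hki, hyp_eq_sum_tt k (i - k) (i + 1), sum_tt_ext k (i - k) (i + 1) (by omega),
    hyp_eq_sum_uu k (i - k) (i + 1), sum_uu_ext k (i - k) (i + 1) (by omega)]
  exact AB k (i - k)
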